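/- arXiv:math/0208047 — 2 statements merged into one kernel-verified Lean document; each statement's English description precedes it below -/
import Mathlib

section
/- Let V be a right-right Yetter–Drinfeld module over H. Then the map θ_V(v) = v₍₀₎ ◁ S(v₍₁₎) is colinear up to a twist by S²: ρ(θ_V(v)) = θ_V(v₍₀₎) ⊗ S²(v₍₁₎) for all v ∈ V. -/
/-!
Since the antipode is an anti-coalgebra map, the Yetter–Drinfeld condition at `S g` reads
`ρ(x ◁ S g) = x₀ ◁ S g₂ ⊗ S²(g₃) x₁ S(g₁)`. Applied to `θ(v) = v₀ ◁ S v₁`, together with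
coassociativity of `ρ`, it gives `ρ(θ v) = v₀ ◁ S v₃ ⊗ S²(v₄) v₁ S(v₂)`, in which `v₁ S(v₂)`
collapses to `ε(v₁)`, leaving `v₀ ◁ S v₁ ⊗ S² v₂ = θ(v₀) ⊗ S² v₁`.

Instead of rearranging fourfold Sweedler sums, the factors `h₁`, `S h₂`, `S h₃`, `S² h₄` are
placed in the algebra `(H ⊗ H) ⊗ H`, where the expression becomes a convolution product of maps
`H → (H ⊗ H) ⊗ H`; the collapse is then associativity of convolution together with `id * S = 1`.
-/

open TensorProduct LinearMap HopfAlgebra Coalgebra WithConv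
open Algebra.TensorProduct (includeLeft includeRight)

theorem Coalgebra.comul_eq_sum_arbitrary {R A : Type*} [CommSemiring R] [AddCommMonoid A]
    [Module R A] [CoalgebraStruct R A] (a : A) :
    comul a = ∑ i ∈ (ℛ R a).index, (ℛ R a).left i ⊗ₜ[R] (ℛ R a).right i :=
  (ℛ R a).eq.symm

section Convolution

variable {R C A B : Type*} [CommSemiring R] [AddCommMonoid C] [Module R C]
  [Semiring A] [Algebra R A] [Semiring B] [Algebra R B]

section CoalgebraStruct

variable [CoalgebraStruct R C]

theorem toConv_includeLeft_comp_mul_includeRight_comp (f : C →ₗ[R] A) (g : C →ₗ[R] B) :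
    toConv ((includeLeft : A →ₐ[R] A ⊗[R] B).toLinearMap ∘ₗ f) *
        toConv ((includeRight : B →ₐ[R] A ⊗[R] B).toLinearMap ∘ₗ g) =
      toConv (map f g ∘ₗ comul) := by
  ext c
  simp [(ℛ R c).convMul_apply, comul_eq_sum_arbitrary c, map_sum]

theorem toConv_includeRight_comp_mul_includeLeft_comp (f : C →ₗ[R] B) (g : C →ₗ[R] A) :
    toConv ((includeRight : B →ₐ[R] A ⊗[R] B).toLinearMap ∘ₗ f) *
        toConv ((includeLeft : A →ₐ[R] A ⊗[R] B).toLinearMap ∘ₗ g) =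
      toConv (map g f ∘ₗ (TensorProduct.comm R C C).toLinearMap ∘ₗ comul) := by
  ext c
  simp [(ℛ R c).convMul_apply, comul_eq_sum_arbitrary c, map_sum]

end CoalgebraStruct

theorem AlgHom.toConv_comp_ofConv_one [Coalgebra R C] (φ : A →ₐ[R] B) :
    toConv (φ.toLinearMap ∘ₗ (1 : WithConv (C →ₗ[R] A)).ofConv) = 1 := by
  ext c
  simp

end Convolution

section Antipode

variable {R H A : Type*} [CommSemiring R] [Semiring H] [HopfAlgebra R H] [Semiring A]
  [Algebra R A]

theorem AlgHom.toConv_mul_toConv_comp_antipode (φ : H →ₐ[R] A) :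
    toConv φ.toLinearMap * toConv (φ.toLinearMap ∘ₗ antipode R) = 1 := by
  have h := congrArg toConv
    (algHom_comp_convMul_distrib φ (toConv LinearMap.id) (toConv (antipode R)))
  simp only [LinearMap.id_mul_antipode, toConv_ofConv, LinearMap.comp_id] at h
  rw [← h, φ.toConv_comp_ofConv_one]

theorem AlgHom.toConv_comp_antipode_mul_toConv (φ : H →ₐ[R] A) :
    toConv (φ.toLinearMap ∘ₗ antipode R) * toConv φ.toLinearMap = 1 := by
  have h := congrArg toConv
    (algHom_comp_convMul_distrib φ (toConv (antipode R)) (toConv LinearMap.id))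
  simp only [LinearMap.antipode_mul_id, toConv_ofConv, LinearMap.comp_id] at h
  rw [← h, φ.toConv_comp_ofConv_one]

end Antipode

namespace HopfAlgebra

variable {R H : Type*} [CommSemiring R] [Semiring H] [HopfAlgebra R H]

/- Both sides are convolution inverses of `Δ`: `Δ * (Δ ∘ S) = 1` is `comul_right_inv`, and
`(S ⊗ S) ∘ τ ∘ Δ = (1 ⊗ S) * (S ⊗ 1)` is a left inverse of `Δ = (· ⊗ 1) * (1 ⊗ ·)`. -/
theorem comul_comp_antipode :
    comul ∘ₗ antipode R = map (antipode R) (antipode R) ∘ₗ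
      (TensorProduct.comm R H H).toLinearMap ∘ₗ (comul : H →ₗ[R] H ⊗[R] H) := by
  let ι₁ : H →ₐ[R] H ⊗[R] H := includeLeft
  let ι₂ : H →ₐ[R] H ⊗[R] H := includeRight
  have hcomul : toConv (comul : H →ₗ[R] H ⊗[R] H) =
      toConv ι₁.toLinearMap * toConv ι₂.toLinearMap := by
    simpa only [LinearMap.comp_id, TensorProduct.map_id, LinearMap.id_comp] using
      (toConv_includeLeft_comp_mul_includeRight_comp (R := R) (C := H)
        LinearMap.id LinearMap.id).symm
  have hleft : toConv (map (antipode R) (antipode R) ∘ₗ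
      (TensorProduct.comm R H H).toLinearMap ∘ₗ (comul : H →ₗ[R] H ⊗[R] H)) *
      toConv comul = 1 := by
    rw [← toConv_includeRight_comp_mul_includeLeft_comp, hcomul, mul_assoc,
      ← mul_assoc (toConv (ι₁.toLinearMap ∘ₗ _)), ι₁.toConv_comp_antipode_mul_toConv, one_mul,
      ι₂.toConv_comp_antipode_mul_toConv]
  exact congrArg ofConv (left_inv_eq_right_inv hleft LinearMap.comul_right_inv).symm

theorem comul_antipode (a : H) :
    comul (antipode R a) =
      map (antipode R) (antipode R) (TensorProduct.comm R H H (comul a)) :=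
  LinearMap.congr_fun comul_comp_antipode a

/- In Sweedler notation: `h₁ S(h₂) ⊗ S h₃ ⊗ S² h₄ = 1 ⊗ S h₁ ⊗ S² h₂`. -/
theorem toConv_includeLeft_mul_antipode_comul₃ :
    toConv ((includeLeft.comp includeLeft : H →ₐ[R] (H ⊗[R] H) ⊗[R] H).toLinearMap) *
        toConv (map (map (antipode R) (antipode R)) (antipode R ∘ₗ antipode R) ∘ₗ
          rTensor H comul ∘ₗ comul) =
      toConv (map ((includeRight : H →ₐ[R] H ⊗[R] H).toLinearMap ∘ₗ antipode R)
        (antipode R ∘ₗ antipode R) ∘ₗ comul) := by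
  set ι : H →ₐ[R] (H ⊗[R] H) ⊗[R] H := includeLeft.comp includeLeft
  have hsplit : toConv (map (map (antipode R) (antipode R)) (antipode R ∘ₗ antipode R) ∘ₗ
        rTensor H comul ∘ₗ comul) =
      toConv (ι.toLinearMap ∘ₗ antipode R) *
        toConv ((includeLeft : H ⊗[R] H →ₐ[R] (H ⊗[R] H) ⊗[R] H).toLinearMap ∘ₗ
          (includeRight : H →ₐ[R] H ⊗[R] H).toLinearMap ∘ₗ antipode R) *
        toConv ((includeRight : H →ₐ[R] (H ⊗[R] H) ⊗[R] H).toLinearMap ∘ₗ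
          (antipode R ∘ₗ antipode R)) := by
    ext h
    simp [ι, comul_eq_sum_arbitrary, map_sum, sum_tmul]
  rw [hsplit, ← mul_assoc, ← mul_assoc, ι.toConv_mul_toConv_comp_antipode, one_mul,
    toConv_includeLeft_comp_mul_includeRight_comp]

end HopfAlgebra

section YetterDrinfeld

variable {k H V : Type*} [CommSemiring k] [AddCommMonoid V] [Module k V]

/- The three factors of `x ◁ S g₂ ⊗ S²(g₃) y S(g₁)` are kept in separate slots of the algebra
`(H ⊗ H) ⊗ H`, and only combined here. -/
noncomputable def ydEval [Semiring H] [Algebra k H] (act : V →ₗ[k] H →ₗ[k] V) (x : V) :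
    (H ⊗[k] H) ⊗[k] H →ₗ[k] V ⊗[k] H :=
  map (act x) (mul' k H) ∘ₗ lTensor H (TensorProduct.comm k H H).toLinearMap ∘ₗ
    (TensorProduct.assoc k H H H).toLinearMap ∘ₗ rTensor H (TensorProduct.comm k H H).toLinearMap

@[simp]
theorem ydEval_tmul [Semiring H] [Algebra k H] (act : V →ₗ[k] H →ₗ[k] V) (x : V) (a b c : H) :
    ydEval act x ((a ⊗ₜ b) ⊗ₜ c) = act x b ⊗ₜ (c * a) := by
  simp [ydEval]

variable [Semiring H] [HopfAlgebra k H]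

/- `(x ⊗ y) ⊗ h ↦ x ◁ h₂ ⊗ S(h₁) y h₃`, the right-hand side of the Yetter–Drinfeld condition. -/
noncomputable def ydTwist (act : V →ₗ[k] H →ₗ[k] V) : (V ⊗[k] H) ⊗[k] H →ₗ[k] V ⊗[k] H :=
  map (lift act)
      (mul' k H ∘ₗ rTensor H (mul' k H) ∘ₗ rTensor H (TensorProduct.comm k H H).toLinearMap ∘ₗ
        (TensorProduct.assoc k H H H).symm.toLinearMap) ∘ₗ
    (TensorProduct.tensorTensorTensorComm k V H H (H ⊗[k] H)).toLinearMap ∘ₗ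
    lTensor (V ⊗[k] H)
      ((TensorProduct.assoc k H H H).toLinearMap ∘ₗ
        rTensor H (TensorProduct.comm k H H).toLinearMap ∘ₗ
        (TensorProduct.assoc k H H H).symm.toLinearMap ∘ₗ rTensor (H ⊗[k] H) (antipode k) ∘ₗ
        lTensor H comul ∘ₗ comul)

theorem comp_lift_eq_ydTwist_comp {act : V →ₗ[k] H →ₗ[k] V} {ρ : V →ₗ[k] V ⊗[k] H}
    (hYD : ∀ v h, ρ (act v h) = ydTwist act (ρ v ⊗ₜ h)) :
    ρ ∘ₗ lift act = ydTwist act ∘ₗ rTensor H ρ :=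
  TensorProduct.ext' fun v h => by simpa using hYD v h

theorem ydTwist_tmul_antipode (act : V →ₗ[k] H →ₗ[k] V) (x : V) (y g : H) :
    ydTwist act ((x ⊗ₜ y) ⊗ₜ antipode k g) =
      ydEval act x ((y ⊗ₜ 1) ⊗ₜ 1 *
        (map (map (antipode k) (antipode k)) (antipode k ∘ₗ antipode k) ∘ₗ
          rTensor H comul ∘ₗ comul) g) := by
  simp only [ydTwist, comp_apply, LinearEquiv.coe_coe, lTensor_tmul, comul_antipode,
    comul_eq_sum_arbitrary g, map_sum, comm_tmul, map_tmul, tmul_sum, rTensor_tmul]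
  simp [comul_eq_sum_arbitrary, map_sum, tmul_sum, sum_tmul, Finset.mul_sum, mul_assoc]

theorem ydTwist_comp_lTensor_antipode_comp_comul (act : V →ₗ[k] H →ₗ[k] V) :
    ydTwist act ∘ₗ lTensor (V ⊗[k] H) (antipode k) ∘ₗ
        (TensorProduct.assoc k V H H).symm.toLinearMap ∘ₗ lTensor V comul =
      map (lift act ∘ₗ lTensor V (antipode k)) (antipode k ∘ₗ antipode k) ∘ₗ
        (TensorProduct.assoc k V H H).symm.toLinearMap ∘ₗ lTensor V comul := by
  refine TensorProduct.ext' fun x h => ?_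
  calc _ = ydEval act x ((toConv ((includeLeft.comp includeLeft :
            H →ₐ[k] (H ⊗[k] H) ⊗[k] H).toLinearMap) *
          toConv (map (map (antipode k) (antipode k)) (antipode k ∘ₗ antipode k) ∘ₗ
            rTensor H comul ∘ₗ comul)) h) := by
        rw [(ℛ k h).convMul_apply, map_sum]
        simp [comul_eq_sum_arbitrary h, map_sum, tmul_sum, ydTwist_tmul_antipode]
    _ = _ := by
        rw [toConv_includeLeft_mul_antipode_comul₃]
        simp [comul_eq_sum_arbitrary h, map_sum, tmul_sum]

end YetterDrinfeld

theorem stmt_14_general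
    {k : Type*} [CommRing k] {H : Type*} [Ring H] [HopfAlgebra k H]
    {V : Type*} [AddCommGroup V] [Module k V]
    -- the right `H`-action `(v, h) ↦ v ◁ h` as a bilinear map:
    (actV : V →ₗ[k] H →ₗ[k] V)
    -- the right `H`-coaction, coassociative and counital:
    (ρV : V →ₗ[k] V ⊗[k] H)
    (hcoassocV : ∀ v : V,
      (TensorProduct.map ρV LinearMap.id) (ρV v)
        = (TensorProduct.assoc k V H H).symm
            ((TensorProduct.map LinearMap.id Coalgebra.comul) (ρV v)))
    -- the Yetter–Drinfeld condition `ρ(v ◁ h) = v₍₀₎ ◁ h₍₂₎ ⊗ S(h₍₁₎)·v₍₁₎·h₍₃₎`: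
    (hYDV : ∀ (v : V) (h : H),
      ρV (actV v h)
        = (TensorProduct.map (TensorProduct.lift actV)
            (LinearMap.mul' k H
              ∘ₗ LinearMap.rTensor H (LinearMap.mul' k H)
              ∘ₗ LinearMap.rTensor H (TensorProduct.comm k H H).toLinearMap
              ∘ₗ (TensorProduct.assoc k H H H).symm.toLinearMap))
          ((TensorProduct.tensorTensorTensorComm k V H H (H ⊗[k] H))
            ((ρV v) ⊗ₜ[k]
              (((TensorProduct.assoc k H H H).toLinearMap
                ∘ₗ LinearMap.rTensor H (TensorProduct.comm k H H).toLinearMap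
                ∘ₗ (TensorProduct.assoc k H H H).symm.toLinearMap
                ∘ₗ LinearMap.rTensor (H ⊗[k] H) (HopfAlgebra.antipode (R := k))
                ∘ₗ LinearMap.lTensor H Coalgebra.comul
                ∘ₗ Coalgebra.comul) h))))
    -- `θ_V(v) = v₍₀₎ ◁ S(v₍₁₎)`:
    (θV : V →ₗ[k] V)
    (hθV : θV = TensorProduct.lift actV
        ∘ₗ LinearMap.lTensor V (HopfAlgebra.antipode (R := k)) ∘ₗ ρV)
    :
    ∀ v : V,
      ρV (θV v)
        = (TensorProduct.map θV
            (HopfAlgebra.antipode (R := k) ∘ₗ HopfAlgebra.antipode (R := k))) (ρV v) := by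
  have hYD : ρV ∘ₗ lift actV = ydTwist actV ∘ₗ rTensor H ρV := comp_lift_eq_ydTwist_comp hYDV
  have hcoassoc : rTensor H ρV ∘ₗ ρV =
      (TensorProduct.assoc k V H H).symm.toLinearMap ∘ₗ lTensor V comul ∘ₗ ρV :=
    LinearMap.ext hcoassocV
  suffices ρV ∘ₗ θV = map θV (antipode k ∘ₗ antipode k) ∘ₗ ρV from LinearMap.congr_fun this
  calc ρV ∘ₗ θV = ydTwist actV ∘ₗ rTensor H ρV ∘ₗ lTensor V (antipode k) ∘ₗ ρV := by
        rw [hθV, ← comp_assoc, hYD, comp_assoc]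
    _ = ydTwist actV ∘ₗ lTensor (V ⊗[k] H) (antipode k) ∘ₗ rTensor H ρV ∘ₗ ρV := by
        simp only [← comp_assoc, rTensor_comp_lTensor, lTensor_comp_rTensor]
    _ = map (lift actV ∘ₗ lTensor V (antipode k)) (antipode k ∘ₗ antipode k) ∘ₗ
          rTensor H ρV ∘ₗ ρV := by
        simpa only [hcoassoc, comp_assoc] using
          congrArg (· ∘ₗ ρV) (ydTwist_comp_lTensor_antipode_comp_comul actV)
    _ = map θV (antipode k ∘ₗ antipode k) ∘ₗ ρV := by
        rw [hθV, ← comp_assoc, rTensor, ← TensorProduct.map_comp, comp_id, comp_assoc]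

/-- For a right-right Yetter–Drinfeld module `V` over `H`, the
map `θ_V(v) = v₍₀₎ ◁ S(v₍₁₎)` is colinear up to a twist by `S²`:
`ρ(θ_V(v)) = θ_V(v₍₀₎) ⊗ S²(v₍₁₎)`. -/
theorem stmt_14
    {k : Type*} [CommRing k] {H : Type*} [Ring H] [HopfAlgebra k H]
    {V : Type*} [AddCommGroup V] [Module k V]
    -- the right `H`-action `(v, h) ↦ v ◁ h` as a bilinear map:
    (actV : V →ₗ[k] H →ₗ[k] V)
    (hactV1 : ∀ v : V, actV v 1 = v)
    (hactVmul : ∀ (v : V) (g h : H), actV v (g * h) = actV (actV v g) h)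
    -- the right `H`-coaction, coassociative and counital:
    (ρV : V →ₗ[k] V ⊗[k] H)
    (hcoassocV : ∀ v : V,
      (TensorProduct.map ρV LinearMap.id) (ρV v)
        = (TensorProduct.assoc k V H H).symm
            ((TensorProduct.map LinearMap.id Coalgebra.comul) (ρV v)))
    (hcounitV : ∀ v : V,
      (TensorProduct.rid k V)
        ((TensorProduct.map LinearMap.id Coalgebra.counit) (ρV v)) = v)
    -- the Yetter–Drinfeld condition `ρ(v ◁ h) = v₍₀₎ ◁ h₍₂₎ ⊗ S(h₍₁₎)·v₍₁₎·h₍₃₎`: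
    (hYDV : ∀ (v : V) (h : H),
      ρV (actV v h)
        = (TensorProduct.map (TensorProduct.lift actV)
            (LinearMap.mul' k H
              ∘ₗ LinearMap.rTensor H (LinearMap.mul' k H)
              ∘ₗ LinearMap.rTensor H (TensorProduct.comm k H H).toLinearMap
              ∘ₗ (TensorProduct.assoc k H H H).symm.toLinearMap))
          ((TensorProduct.tensorTensorTensorComm k V H H (H ⊗[k] H))
            ((ρV v) ⊗ₜ[k]
              (((TensorProduct.assoc k H H H).toLinearMap
                ∘ₗ LinearMap.rTensor H (TensorProduct.comm k H H).toLinearMap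
                ∘ₗ (TensorProduct.assoc k H H H).symm.toLinearMap
                ∘ₗ LinearMap.rTensor (H ⊗[k] H) (HopfAlgebra.antipode (R := k))
                ∘ₗ LinearMap.lTensor H Coalgebra.comul
                ∘ₗ Coalgebra.comul) h))))
    -- `θ_V(v) = v₍₀₎ ◁ S(v₍₁₎)`:
    (θV : V →ₗ[k] V)
    (hθV : θV = TensorProduct.lift actV
        ∘ₗ LinearMap.lTensor V (HopfAlgebra.antipode (R := k)) ∘ₗ ρV)
    :
    ∀ v : V,
      ρV (θV v)
        = (TensorProduct.map θV
            (HopfAlgebra.antipode (R := k) ∘ₗ HopfAlgebra.antipode (R := k))) (ρV v) :=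
  stmt_14_general actV ρV hcoassocV hYDV θV hθV
end

section
/- Let V be a right-right Yetter–Drinfeld module over H, where the antipode S of H is bijective. Then θ_V is bijective with inverse given by ψ(v) = v₍₀₎ ◁ S⁻²(v₍₁₎): one has θ_V(ψ(v)) = v and ψ(θ_V(v)) = v for all v ∈ V. -/
/-!
Write `θ_f v = v₍₀₎ ◁ f v₍₁₎`, so that `θ_V = θ_S` and `ψ = θ_{S⁻²}`. Coassociativity gives
`θ_f ∘ θ_g = θ_{f ⋆ (φ ∘ g)}` whenever `θ_f (v ◁ h) = θ_f v ◁ φ h`, and counitality gives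
`θ_1 = id` for the convolution unit `1 = η ∘ ε`. The Yetter–Drinfeld condition provides this twisted
linearity with `φ = S²` for `θ_S` and with `φ = S⁻²` for `θ_{S⁻²}`, so both composites are `θ_1`
because `S ⋆ id = 1` and `S⁻² ⋆ S⁻¹ = S⁻² ∘ (id ⋆ S) = 1`.
-/

open TensorProduct LinearMap HopfAlgebra Coalgebra WithConv

section AntipodeInverse

variable {k H : Type*} [CommRing k] [Ring H] [HopfAlgebra k H] {T : H →ₗ[k] H}

lemma inv_antipode_mul (hTS : ∀ h, T (antipode k h) = h) (hST : ∀ h, antipode k (T h) = h)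
    (a b : H) : T (a * b) = T b * T a :=
  Function.LeftInverse.injective hTS <| by rw [hST, antipode_mul_antidistrib, hST, hST]

lemma inv_antipode_algebraMap (hTS : ∀ h, T (antipode k h) = h) (r : k) :
    T (algebraMap k H r) = algebraMap k H r := by
  simpa [Algebra.algebraMap_eq_smul_one] using hTS (algebraMap k H r)

lemma mul_inv_antipode_comm_comul (hTS : ∀ h, T (antipode k h) = h)
    (hST : ∀ h, antipode k (T h) = h) :
    mul' k H ∘ₗ lTensor H T ∘ₗ (TensorProduct.comm k H H).toLinearMap ∘ₗ comul
      = Algebra.linearMap k H ∘ₗ counit := by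
  have hS : antipode k ∘ₗ mul' k H ∘ₗ lTensor H T ∘ₗ (TensorProduct.comm k H H).toLinearMap
      = mul' k H ∘ₗ lTensor H (antipode k) := by
    ext a b; simp [antipode_mul_antidistrib, hST]
  ext h
  simpa [hTS, inv_antipode_algebraMap hTS] using congr(T ($hS (comul h)))

lemma inv_antipode_sq_convMul_inv_antipode (hTS : ∀ h, T (antipode k h) = h)
    (hST : ∀ h, antipode k (T h) = h) : toConv (T ∘ₗ T) * toConv T = 1 := by
  have hT : mul' k H ∘ₗ map (T ∘ₗ T) T = (T ∘ₗ T) ∘ₗ mul' k H ∘ₗ lTensor H (antipode k) := by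
    ext a b; simp [inv_antipode_mul hTS hST, hTS]
  rw [LinearMap.convMul_def, LinearMap.convOne_def, ofConv_toConv, ofConv_toConv,
    ← comp_assoc, hT]
  congr 1
  ext h
  simp [inv_antipode_algebraMap hTS]

end AntipodeInverse

section YetterDrinfeld

variable {k H V : Type*} [CommRing k] [Ring H] [HopfAlgebra k H] [AddCommGroup V] [Module k V]
  (act : V →ₗ[k] H →ₗ[k] V) (ρ : V →ₗ[k] V ⊗[k] H)

noncomputable def coactAct (f : H →ₗ[k] H) : V →ₗ[k] V :=
  lift act ∘ₗ lTensor V f ∘ₗ ρ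

/-- `(w ⊗ x) ⊗ (a ⊗ (b ⊗ c)) ↦ (w ◁ b) ⊗ S(a) x c`, written exactly as in the Yetter–Drinfeld
hypothesis of `stmt_17`, so that the hypothesis unfolds to it. -/
noncomputable def ydCoactionRhs : (V ⊗[k] H) ⊗[k] (H ⊗[k] (H ⊗[k] H)) →ₗ[k] V ⊗[k] H :=
  TensorProduct.map (lift act)
      (mul' k H ∘ₗ rTensor H (mul' k H) ∘ₗ rTensor H (TensorProduct.comm k H H).toLinearMap
        ∘ₗ (TensorProduct.assoc k H H H).symm.toLinearMap)
    ∘ₗ (tensorTensorTensorComm k V H H (H ⊗[k] H)).toLinearMap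
    ∘ₗ lTensor (V ⊗[k] H)
      ((TensorProduct.assoc k H H H).toLinearMap ∘ₗ rTensor H (TensorProduct.comm k H H).toLinearMap
        ∘ₗ (TensorProduct.assoc k H H H).symm.toLinearMap ∘ₗ rTensor (H ⊗[k] H) (antipode k))

@[simp]
lemma ydCoactionRhs_tmul (w : V) (x a b c : H) :
    ydCoactionRhs act ((w ⊗ₜ x) ⊗ₜ (a ⊗ₜ (b ⊗ₜ c))) = act w b ⊗ₜ (antipode k a * x * c) := by
  simp [ydCoactionRhs, mul_assoc]

variable {act ρ}

lemma coactAct_one (hact_one : ∀ v, act v 1 = v)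
    (hcounit : ∀ v, TensorProduct.rid k V (lTensor V (counit : H →ₗ[k] k) (ρ v)) = v) :
    coactAct act ρ (1 : WithConv (H →ₗ[k] H)).ofConv = LinearMap.id := by
  have h : lift act ∘ₗ lTensor V (Algebra.linearMap k H ∘ₗ counit)
      = (TensorProduct.rid k V).toLinearMap ∘ₗ lTensor V (counit : H →ₗ[k] k) := by
    ext w x; simp [Algebra.algebraMap_eq_smul_one, hact_one]
  ext v
  rw [LinearMap.convOne_def, ofConv_toConv, coactAct, ← comp_assoc, h]
  exact hcounit v

lemma coactAct_comp_coactAct (hact_mul : ∀ v g h, act v (g * h) = act (act v g) h)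
    (hcoassoc : ∀ v, rTensor H ρ (ρ v) = (TensorProduct.assoc k V H H).symm (lTensor V comul (ρ v)))
    {f g φ : H →ₗ[k] H}
    (hf : coactAct act ρ f ∘ₗ lift act = lift act ∘ₗ map (coactAct act ρ f) φ) :
    coactAct act ρ f ∘ₗ coactAct act ρ g
      = coactAct act ρ (toConv f * toConv (φ ∘ₗ g)).ofConv := by
  have hassoc : lift act ∘ₗ map (lift act ∘ₗ lTensor V f) (φ ∘ₗ g)
        ∘ₗ (TensorProduct.assoc k V H H).symm.toLinearMap
      = lift act ∘ₗ lTensor V (mul' k H ∘ₗ map f (φ ∘ₗ g)) := by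
    ext w a b; simp [hact_mul]
  ext v
  calc coactAct act ρ f (coactAct act ρ g v)
      = lift act (map (coactAct act ρ f) φ (lTensor V g (ρ v))) := congr($hf (lTensor V g (ρ v)))
    _ = lift act (map (lift act ∘ₗ lTensor V f) (φ ∘ₗ g) (rTensor H ρ (ρ v))) := by
        rw [← comp_apply (map _ _) (rTensor H ρ), map_comp_rTensor, ← comp_apply (map _ _),
          map_comp_lTensor]
        rfl
    _ = lift act (lTensor V (mul' k H ∘ₗ map f (φ ∘ₗ g)) (lTensor V comul (ρ v))) := by
        rw [hcoassoc]
        exact congr($hassoc (lTensor V comul (ρ v)))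
    _ = _ := by
        rw [LinearMap.convMul_def, ← lTensor_comp_apply]
        rfl

lemma coactAct_antipode_comp_lift (hact_mul : ∀ v g h, act v (g * h) = act (act v g) h)
    (hYD : ∀ v h, ρ (act v h) = ydCoactionRhs act (ρ v ⊗ₜ lTensor H comul (comul h))) :
    coactAct act ρ (antipode k) ∘ₗ lift act
      = lift act ∘ₗ map (coactAct act ρ (antipode k)) (antipode k ∘ₗ antipode k) := by
  ext v h
  have hcontract : lTensor H (mul' k H ∘ₗ lTensor H (antipode k)) (lTensor H comul (comul h))
      = h ⊗ₜ 1 := by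
    rw [← lTensor_comp_apply, comp_assoc, mul_antipode_lTensor_comul, lTensor_comp_apply,
      lTensor_counit_comul]
    simp
  have key : lift act ∘ₗ lTensor V (antipode k) ∘ₗ ydCoactionRhs act
        ∘ₗ (TensorProduct.mk k _ _).flip (lTensor H comul (comul h))
      = act.flip (antipode k (antipode k h)) ∘ₗ lift act ∘ₗ lTensor V (antipode k) := by
    ext w x
    -- both sides send `a ⊗ (b ⊗ c)` to `w ◁ b S(c) S(x) S²(a)`, and `hcontract` collapses `b S(c)`
    have hpure : lift act ∘ₗ lTensor V (antipode k) ∘ₗ ydCoactionRhs act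
          ∘ₗ TensorProduct.mk k _ _ (w ⊗ₜ x)
        = act w ∘ₗ lift ((mul k H).flip ∘ₗ mulLeft k (antipode k x) ∘ₗ antipode k ∘ₗ antipode k)
          ∘ₗ lTensor H (mul' k H ∘ₗ lTensor H (antipode k)) := by
      ext a b c
      simp [antipode_mul_antidistrib, hact_mul]
    simpa [hcontract, hact_mul] using congr($hpure (lTensor H comul (comul h)))
  simpa [coactAct, hYD] using congr($key (ρ v))

lemma coactAct_inv_antipode_sq_comp_lift {T : H →ₗ[k] H} (hTS : ∀ h, T (antipode k h) = h)
    (hST : ∀ h, antipode k (T h) = h) (hact_mul : ∀ v g h, act v (g * h) = act (act v g) h)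
    (hYD : ∀ v h, ρ (act v h) = ydCoactionRhs act (ρ v ⊗ₜ lTensor H comul (comul h))) :
    coactAct act ρ (T ∘ₗ T) ∘ₗ lift act = lift act ∘ₗ map (coactAct act ρ (T ∘ₗ T)) (T ∘ₗ T) := by
  ext v h
  have hcontract : rTensor H (mul' k H ∘ₗ lTensor H T ∘ₗ (TensorProduct.comm k H H).toLinearMap)
      (rTensor H comul (comul h)) = 1 ⊗ₜ h := by
    rw [← rTensor_comp_apply, comp_assoc, comp_assoc,
      mul_inv_antipode_comm_comul hTS hST, rTensor_comp_apply, rTensor_counit_comul]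
    simp
  have key : lift act ∘ₗ lTensor V (T ∘ₗ T) ∘ₗ ydCoactionRhs act
        ∘ₗ (TensorProduct.mk k _ _).flip (lTensor H comul (comul h))
      = act.flip (T (T h)) ∘ₗ lift act ∘ₗ lTensor V (T ∘ₗ T) := by
    ext w x
    -- both sides send `a ⊗ (b ⊗ c)` to `w ◁ b T(a) T²(x) T²(c)`, and `hcontract` collapses `b T(a)`
    have hpure : lift act ∘ₗ lTensor V (T ∘ₗ T) ∘ₗ ydCoactionRhs act
          ∘ₗ TensorProduct.mk k _ _ (w ⊗ₜ x)
        = act w ∘ₗ lift ((mul k H).compl₂ (mulLeft k (T (T x)) ∘ₗ T ∘ₗ T))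
          ∘ₗ rTensor H (mul' k H ∘ₗ lTensor H T ∘ₗ (TensorProduct.comm k H H).toLinearMap)
          ∘ₗ (TensorProduct.assoc k H H H).symm.toLinearMap := by
      ext a b c
      simp [inv_antipode_mul hTS hST, hTS, hact_mul]
    simpa [hcontract, hact_mul] using congr($hpure (lTensor H comul (comul h)))
  simpa [coactAct, hYD] using congr($key (ρ v))

end YetterDrinfeld

/-- For a right-right Yetter–Drinfeld module `V` over `H` with
bijective antipode (inverse `Sinv`), the map `θ_V` is bijective with inverse
`ψ(v) = v₍₀₎ ◁ S⁻²(v₍₁₎)`: `θ_V(ψ(v)) = v` and `ψ(θ_V(v)) = v`. -/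
theorem stmt_17
    {k : Type*} [CommRing k] {H : Type*} [Ring H] [HopfAlgebra k H]
    -- the antipode is bijective, with (linear) inverse `Sinv`:
    (Sinv : H →ₗ[k] H)
    (hSinv1 : ∀ h : H, Sinv (HopfAlgebra.antipode (R := k) h) = h)
    (hSinv2 : ∀ h : H, HopfAlgebra.antipode (R := k) (Sinv h) = h)
    {V : Type*} [AddCommGroup V] [Module k V]
    -- the right `H`-action `(v, h) ↦ v ◁ h` as a bilinear map:
    (actV : V →ₗ[k] H →ₗ[k] V)
    (hactV1 : ∀ v : V, actV v 1 = v)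
    (hactVmul : ∀ (v : V) (g h : H), actV v (g * h) = actV (actV v g) h)
    -- the right `H`-coaction, coassociative and counital:
    (ρV : V →ₗ[k] V ⊗[k] H)
    (hcoassocV : ∀ v : V,
      (TensorProduct.map ρV LinearMap.id) (ρV v)
        = (TensorProduct.assoc k V H H).symm
            ((TensorProduct.map LinearMap.id Coalgebra.comul) (ρV v)))
    (hcounitV : ∀ v : V,
      (TensorProduct.rid k V)
        ((TensorProduct.map LinearMap.id Coalgebra.counit) (ρV v)) = v)
    -- the Yetter–Drinfeld condition `ρ(v ◁ h) = v₍₀₎ ◁ h₍₂₎ ⊗ S(h₍₁₎)·v₍₁₎·h₍₃₎`: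
    (hYDV : ∀ (v : V) (h : H),
      ρV (actV v h)
        = (TensorProduct.map (TensorProduct.lift actV)
            (LinearMap.mul' k H
              ∘ₗ LinearMap.rTensor H (LinearMap.mul' k H)
              ∘ₗ LinearMap.rTensor H (TensorProduct.comm k H H).toLinearMap
              ∘ₗ (TensorProduct.assoc k H H H).symm.toLinearMap))
          ((TensorProduct.tensorTensorTensorComm k V H H (H ⊗[k] H))
            ((ρV v) ⊗ₜ[k]
              (((TensorProduct.assoc k H H H).toLinearMap
                ∘ₗ LinearMap.rTensor H (TensorProduct.comm k H H).toLinearMap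
                ∘ₗ (TensorProduct.assoc k H H H).symm.toLinearMap
                ∘ₗ LinearMap.rTensor (H ⊗[k] H) (HopfAlgebra.antipode (R := k))
                ∘ₗ LinearMap.lTensor H Coalgebra.comul
                ∘ₗ Coalgebra.comul) h))))
    -- `θ_V(v) = v₍₀₎ ◁ S(v₍₁₎)`:
    (θV : V →ₗ[k] V)
    (hθV : θV = TensorProduct.lift actV
        ∘ₗ LinearMap.lTensor V (HopfAlgebra.antipode (R := k)) ∘ₗ ρV)
    -- `ψ(v) = v₍₀₎ ◁ S⁻²(v₍₁₎)`:
    (ψ : V →ₗ[k] V)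
    (hψ : ψ = TensorProduct.lift actV ∘ₗ LinearMap.lTensor V (Sinv ∘ₗ Sinv) ∘ₗ ρV) :
    ∀ v : V, θV (ψ v) = v ∧ ψ (θV v) = v := by
  subst hθV hψ
  have hYD : ∀ v h, ρV (actV v h) = ydCoactionRhs actV (ρV v ⊗ₜ lTensor H comul (comul h)) :=
    fun v h => by rw [hYDV]; rfl
  have hθψ : coactAct actV ρV (antipode k) ∘ₗ coactAct actV ρV (Sinv ∘ₗ Sinv) = LinearMap.id := by
    have hS2T2 : (antipode k ∘ₗ antipode k) ∘ₗ Sinv ∘ₗ Sinv = LinearMap.id := by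
      ext; simp [hSinv2]
    rw [coactAct_comp_coactAct hactVmul hcoassocV (coactAct_antipode_comp_lift hactVmul hYD),
      hS2T2, antipode_mul_id, coactAct_one hactV1 hcounitV]
  have hψθ : coactAct actV ρV (Sinv ∘ₗ Sinv) ∘ₗ coactAct actV ρV (antipode k) = LinearMap.id := by
    have hT2S : (Sinv ∘ₗ Sinv) ∘ₗ antipode k = Sinv := by
      ext; simp [hSinv1]
    rw [coactAct_comp_coactAct hactVmul hcoassocV
        (coactAct_inv_antipode_sq_comp_lift hSinv1 hSinv2 hactVmul hYD),
      hT2S, inv_antipode_sq_convMul_inv_antipode hSinv1 hSinv2, coactAct_one hactV1 hcounitV]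
  exact fun v => ⟨congr($hθψ v), congr($hψθ v)⟩
end
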